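/- Let N ≥ 1 and equip the space of N×N complex matrices with the normalized Hilbert–Schmidt inner product ⟨A,B⟩ = tr(A†B)/N. Let (P_i) be an orthonormal basis of this matrix space with respect to this inner product. Let Λ and Φ be linear maps on N×N complex matrices with Λ(P_i) = λ_i P_i and Φ(P_i) = (λ_i + ε_i) P_i for complex scalars λ_i, ε_i. Let ρ be a positive semidefinite N×N matrix with tr(ρ) = 1, and let Π be an N×N Hermitian matrix with 0 ≤ Π ≤ I. Then |tr(Π Φ(ρ)) − tr(Π Λ(ρ))| ≤ √N · max_i |ε_i|. -/

import Mathlib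

open scoped BigOperators Matrix ComplexOrder

/-!
Let `E = Φ - Λ`, which is diagonal in the basis `(P i)` with eigenvalues `eps i`. In coordinates
with respect to an orthogonal basis with `tr (P iᴴ P i) = r`, one has
`tr (Bᴴ (E A)) = r * ∑ conj (b i) * eps i * a i`, so by Cauchy–Schwarz
`|tr (Π E ρ)| ≤ max |eps i| * √(tr Π²) * √(tr ρ²)`, the factors `r` cancelling. Finally
`tr ρ² ≤ (tr ρ)² = 1`, and `tr Π² ≤ tr Π ≤ N` since
`Π - Π² = (1 - Π) Π (1 - Π) + Π (1 - Π) Π ≥ 0`.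
-/

lemma Module.Basis.repr_apply_eq_mul_of_apply_eq_smul {ι R M : Type*}
    [CommSemiring R] [AddCommMonoid M] [Module R M] (P : Module.Basis ι R M) {T : M →ₗ[R] M}
    {e : ι → R} (hT : ∀ i, T (P i) = e i • P i) (x : M) (i : ι) :
    P.repr (T x) i = e i * P.repr x i := by
  have h : Finsupp.lapply i ∘ₗ P.repr.toLinearMap ∘ₗ T =
      e i • (Finsupp.lapply i ∘ₗ P.repr.toLinearMap) :=
    P.ext fun j ↦ by by_cases hij : j = i <;> simp [hT, hij]
  exact LinearMap.congr_fun h x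

namespace Matrix

variable {n 𝕜 : Type*} [Fintype n] [DecidableEq n] [RCLike 𝕜]

lemma IsHermitian.trace_mul_self_eq_sum_sq_eigenvalues {A : Matrix n n 𝕜} (hA : A.IsHermitian) :
    (A * A).trace = ∑ i, (hA.eigenvalues i : 𝕜) ^ 2 := by
  conv_lhs => rw [hA.spectral_theorem, ← map_mul, Unitary.conjStarAlgAut_apply, trace_mul_cycle,
    Unitary.coe_star_mul_self, one_mul, diagonal_mul_diagonal, trace_diagonal]
  simp [sq]

lemma PosSemidef.re_trace_mul_self_le_sq {A : Matrix n n 𝕜} (hA : A.PosSemidef) :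
    RCLike.re (A * A).trace ≤ RCLike.re A.trace ^ 2 := by
  rw [hA.1.trace_mul_self_eq_sum_sq_eigenvalues, hA.1.trace_eq_sum_eigenvalues]
  exact_mod_cast Finset.sum_sq_le_sq_sum_of_nonneg fun i _ ↦ hA.eigenvalues_nonneg i

lemma PosSemidef.sub_mul_self {A : Matrix n n 𝕜} (hA : A.PosSemidef) (hA1 : (1 - A).PosSemidef) :
    (A - A * A).PosSemidef := by
  have h := (hA.conjTranspose_mul_mul_same (1 - A)).add (hA1.conjTranspose_mul_mul_same A)
  have hA' : Aᴴ = A := hA.1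
  rwa [conjTranspose_sub, conjTranspose_one, hA', show
    (1 - A) * A * (1 - A) + A * (1 - A) * A = A - A * A by noncomm_ring] at h

lemma PosSemidef.re_trace_mul_self_le_card {A : Matrix n n 𝕜} (hA : A.PosSemidef)
    (hA1 : (1 - A).PosSemidef) : RCLike.re (A * A).trace ≤ Fintype.card n := by
  have h1 := (RCLike.nonneg_iff.mp (hA.sub_mul_self hA1).trace_nonneg).1
  have h2 := (RCLike.nonneg_iff.mp hA1.trace_nonneg).1
  simp only [trace_sub, trace_one, map_sub, RCLike.natCast_re] at h1 h2
  linarith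

section OrthogonalBasis

variable {ι : Type*} [Fintype ι] [DecidableEq ι] {P : Module.Basis ι 𝕜 (Matrix n n 𝕜)} {r : ℝ}

lemma trace_conjTranspose_mul_eq_sum_repr
    (hP : ∀ i j, ((P i)ᴴ * P j).trace = if i = j then (r : 𝕜) else 0) (A B : Matrix n n 𝕜) :
    (Aᴴ * B).trace = r * ∑ i, star (P.repr A i) * P.repr B i := by
  conv_lhs => rw [← P.sum_repr A, ← P.sum_repr B]
  rw [conjTranspose_sum, Finset.sum_mul_sum, trace_sum]
  simp only [conjTranspose_smul, smul_mul_smul_comm, trace_sum, trace_smul, hP, mul_ite, mul_zero,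
    Finset.sum_ite_eq, Finset.mem_univ, if_true, Finset.mul_sum, smul_eq_mul]
  exact Finset.sum_congr rfl fun i _ ↦ by ring

lemma re_trace_conjTranspose_mul_self_eq_sum_repr
    (hP : ∀ i j, ((P i)ᴴ * P j).trace = if i = j then (r : 𝕜) else 0) (A : Matrix n n 𝕜) :
    RCLike.re (Aᴴ * A).trace = r * ∑ i, ‖P.repr A i‖ ^ 2 := by
  rw [trace_conjTranspose_mul_eq_sum_repr hP]
  simp [RCLike.star_def, RCLike.conj_mul]

lemma norm_trace_conjTranspose_mul_apply_le (hr : 0 ≤ r)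
    (hP : ∀ i j, ((P i)ᴴ * P j).trace = if i = j then (r : 𝕜) else 0)
    {T : Matrix n n 𝕜 →ₗ[𝕜] Matrix n n 𝕜} {e : ι → 𝕜} (hT : ∀ i, T (P i) = e i • P i)
    (A B : Matrix n n 𝕜) :
    ‖(Bᴴ * T A).trace‖ ≤
      (⨆ i, ‖e i‖) * √(RCLike.re (Bᴴ * B).trace) * √(RCLike.re (Aᴴ * A).trace) := by
  set M := ⨆ i, ‖e i‖
  have he i : ‖e i‖ ≤ M := le_ciSup (Set.finite_range fun i ↦ ‖e i‖).bddAbove i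
  have hM : 0 ≤ M := Real.iSup_nonneg fun i ↦ norm_nonneg (e i)
  set a := fun i ↦ ‖P.repr A i‖
  set b := fun i ↦ ‖P.repr B i‖
  calc ‖(Bᴴ * T A).trace‖ = r * ‖∑ i, star (P.repr B i) * (e i * P.repr A i)‖ := by
        simp only [trace_conjTranspose_mul_eq_sum_repr hP, P.repr_apply_eq_mul_of_apply_eq_smul hT,
          norm_mul, RCLike.norm_ofReal, abs_of_nonneg hr]
    _ ≤ r * ∑ i, b i * (M * a i) := by
        gcongr
        refine (norm_sum_le _ _).trans (Finset.sum_le_sum fun i _ ↦ ?_)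
        rw [norm_mul, norm_mul, norm_star]
        gcongr
        exact he i
    _ = M * (r * ∑ i, b i * a i) := by
        simp only [Finset.mul_sum]
        exact Finset.sum_congr rfl fun i _ ↦ by ring
    _ ≤ M * (r * (√(∑ i, b i ^ 2) * √(∑ i, a i ^ 2))) := by
        gcongr
        exact Real.sum_mul_le_sqrt_mul_sqrt _ _ _
    _ = M * √(r * ∑ i, b i ^ 2) * √(r * ∑ i, a i ^ 2) := by
        rw [Real.sqrt_mul hr, Real.sqrt_mul hr]
        linear_combination -M * √(∑ i, b i ^ 2) * √(∑ i, a i ^ 2) * Real.mul_self_sqrt hr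
    _ = M * √(RCLike.re (Bᴴ * B).trace) * √(RCLike.re (Aᴴ * A).trace) := by
        rw [re_trace_conjTranspose_mul_self_eq_sum_repr hP,
          re_trace_conjTranspose_mul_self_eq_sum_repr hP]

end OrthogonalBasis

end Matrix

theorem stmt3 {N : ℕ} (hN : 1 ≤ N) {ι : Type*} [Fintype ι] [DecidableEq ι]
    (P : Module.Basis ι ℂ (Matrix (Fin N) (Fin N) ℂ))
    (hortho : ∀ i j, (Matrix.trace ((P i)ᴴ * P j)) / (N : ℂ) = if i = j then 1 else 0)
    (Λ Φ : Matrix (Fin N) (Fin N) ℂ →ₗ[ℂ] Matrix (Fin N) (Fin N) ℂ)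
    (lam eps : ι → ℂ)
    (hΛ : ∀ i, Λ (P i) = lam i • P i)
    (hΦ : ∀ i, Φ (P i) = (lam i + eps i) • P i)
    (ρ : Matrix (Fin N) (Fin N) ℂ) (hρ : ρ.PosSemidef) (hρtr : ρ.trace = 1)
    (Pm : Matrix (Fin N) (Fin N) ℂ) (hPm : Pm.PosSemidef) (hPm1 : (1 - Pm).PosSemidef) :
    ‖(Pm * Φ ρ).trace - (Pm * Λ ρ).trace‖ ≤
      Real.sqrt N * ⨆ i, ‖eps i‖ := by
  have hN0 : (N : ℂ) ≠ 0 := by exact_mod_cast (by omega : N ≠ 0)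
  have hP i j : ((P i)ᴴ * P j).trace = if i = j then ((N : ℝ) : ℂ) else 0 := by
    rw [Complex.ofReal_natCast, ← div_left_inj' hN0, hortho, ite_div, div_self hN0, zero_div]
  have hT i : (Φ - Λ) (P i) = eps i • P i := by
    rw [LinearMap.sub_apply, hΦ, hΛ, ← sub_smul, add_sub_cancel_left]
  have hρ2 : √(ρᴴ * ρ).trace.re ≤ 1 := by
    rw [hρ.1.eq, Real.sqrt_le_one]
    simpa [hρtr] using hρ.re_trace_mul_self_le_sq
  have hPm2 : √(Pmᴴ * Pm).trace.re ≤ √N := by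
    rw [hPm.1.eq]
    exact Real.sqrt_le_sqrt (by simpa using hPm.re_trace_mul_self_le_card hPm1)
  calc ‖(Pm * Φ ρ).trace - (Pm * Λ ρ).trace‖ = ‖(Pmᴴ * (Φ - Λ) ρ).trace‖ := by
        rw [hPm.1.eq, LinearMap.sub_apply, mul_sub, Matrix.trace_sub]
    _ ≤ (⨆ i, ‖eps i‖) * √(Pmᴴ * Pm).trace.re * √(ρᴴ * ρ).trace.re :=
        Matrix.norm_trace_conjTranspose_mul_apply_le N.cast_nonneg hP hT ρ Pm
    _ ≤ (⨆ i, ‖eps i‖) * √N * 1 := by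
        have hM : 0 ≤ ⨆ i, ‖eps i‖ := Real.iSup_nonneg fun i ↦ norm_nonneg (eps i)
        gcongr
    _ = √N * ⨆ i, ‖eps i‖ := by ring
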